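/- Let (X, d, μ) be a metric measure space such that there exists r > 0 with inf_{x∈X} μ(B(x,r)) > 0, and fix a basepoint x₀ ∈ X. If lim_{l→∞} (1/l) log vol_δ^{x₀}(l) = 0 for all δ > 0, then the coarse entropy of X is zero: h_∞(X) = 0. -/

import Mathlib

open Filter Set Metric
open scoped ENNReal

noncomputable section

/-- `p` represents a `δ`-pseudoorbit of `f` of length `n` starting at `x₀`:
`(p 0, p 1, …, p n)` with `p 0 = x₀` and `dist (f (p i)) (p (i+1)) ≤ δ` for `i < n`.
(Only the values `p 0, …, p n` are relevant.) -/
def IsPseudoOrbit {X : Type*} [MetricSpace X] (f : X → X) (δ : ℝ) (n : ℕ) (x₀ : X)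
    (p : ℕ → X) : Prop :=
  p 0 = x₀ ∧ ∀ i < n, dist (f (p i)) (p (i + 1)) ≤ δ

/-- The distance between two pseudoorbits of length `n`:
the maximum of `dist (p i) (q i)` over `0 ≤ i ≤ n`. -/
def orbitDist {X : Type*} [MetricSpace X] (n : ℕ) (p q : ℕ → X) : ℝ :=
  (Finset.range (n + 1)).sup' (by simp) fun i => dist (p i) (q i)

/-- A family `S` of pseudoorbits of length `n` is `R`-separated if any two distinct
members are at pseudoorbit distance at least `R`. -/
def IsSepFamily {X : Type*} [MetricSpace X] (n : ℕ) (R : ℝ) (S : Set (ℕ → X)) : Prop :=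
  ∀ p ∈ S, ∀ q ∈ S, p ≠ q → R ≤ orbitDist n p q

/-- `sepCard f n R δ x₀` is `s(f,n,R,δ,x₀)`: the supremum of cardinalities of
`R`-separated sets of `δ`-pseudoorbits of `f` of length `n` starting at `x₀`. -/
def sepCard {X : Type*} [MetricSpace X] (f : X → X) (n : ℕ) (R δ : ℝ) (x₀ : X) : ℝ≥0∞ :=
  ⨆ (S : Set (ℕ → X)) (_ : ∀ p ∈ S, IsPseudoOrbit f δ n x₀ p) (_ : IsSepFamily n R S),
    (S.encard : ℝ≥0∞)

/-- Extended logarithm `[0,∞] → [0,∞]` (negative values are truncated to `0`). -/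
def elog (x : ℝ≥0∞) : ℝ≥0∞ :=
  if x = ⊤ then ⊤ else ENNReal.ofReal (Real.log x.toReal)

/-- The coarse entropy of `f : X → X` computed at the basepoint `x₀`:
`h_∞(f) = lim_{δ→∞} lim_{R→∞} limsup_{n→∞} (1/n) log s(f,n,R,δ,x₀)`.
Since `s` is nondecreasing in `δ` and nonincreasing in `R`, the limits in `δ` and `R`
are the supremum over `δ > 0` and the infimum over `R > 0`, respectively. -/
def coarseEntropyAt {X : Type*} [MetricSpace X] (f : X → X) (x₀ : X) : ℝ≥0∞ :=
  ⨆ (δ : ℝ) (_ : 0 < δ), ⨅ (R : ℝ) (_ : 0 < R),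
    Filter.atTop.limsup fun n : ℕ => elog (sepCard f n R δ x₀) / (n : ℝ≥0∞)

end

/-- The `δ`-ball of radius `n` around `x₀`: the set of endpoints of `δ`-paths of
length `n` starting at `x₀`. -/
def stepBall {X : Type*} [MetricSpace X] (δ : ℝ) (x₀ : X) (n : ℕ) : Set X :=
  {y | ∃ p : ℕ → X, p 0 = x₀ ∧ p n = y ∧ ∀ i < n, dist (p i) (p (i + 1)) ≤ δ}

/-- The `δ`-component of `x`: all points connected to `x` by some `δ`-path. -/
def deltaComponent {X : Type*} [MetricSpace X] (δ : ℝ) (x : X) : Set X :=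
  {y | ∃ n : ℕ, y ∈ stepBall δ x n}

/-- `vol_δ^x(l) = sup_{x₀ ∈ [x]_δ} μ(B_δ(x₀, l))`. -/
noncomputable def volGrowth {X : Type*} [MetricSpace X] [MeasurableSpace X]
    (μ : MeasureTheory.Measure X) (δ : ℝ) (x : X) (l : ℕ) : ℝ≥0∞ :=
  ⨆ x₀ ∈ deltaComponent δ x, μ (stepBall δ x₀ l)

/-!
Fix `δ`, enlarge it to `Δ > 2r`, and fix a block length `k`. Sampling a `δ`-path of length `n`
every `k` steps gives `n / k` points, each reachable from the previous one in `k` steps.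
A maximal `Δ`-separated subset of a `(k+1)`-step ball has disjoint `r`-balls, each of measure at
least `c = inf_x μ(B(x, r)) > 0`, inside a `3k`-step ball, so it is a `Δ`-net with at most
`vol_Δ(3k) / c` points. Following these nets step by step, every sampled path is `Δ`-shadowed
by one of at most `(vol_Δ(3k) / c) ^ (n / k)` sequences, and two paths shadowed by the same
sequence stay within `2Δ(k+1)` of each other. Hence
`s(n, 2Δ(k+1)+1, δ) ≤ (vol_Δ(3k) / c) ^ (n / k)`, the entropy is at most `log (vol_Δ(3k) / c) / k`,
and this tends to `0` as `k → ∞` because the volume growth is subexponential.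
-/

open MeasureTheory
open scoped NNReal

section Paths

variable {X : Type*} [MetricSpace X] {δ : ℝ} {x y z : X} {a b n : ℕ}

@[simp]
lemma stepBall_zero : stepBall δ x 0 = {x} := by
  ext y
  constructor
  · rintro ⟨p, hp0, hpy, -⟩
    exact hpy ▸ hp0
  · rintro rfl
    exact ⟨fun _ => y, rfl, rfl, fun _ h => absurd h (Nat.not_lt_zero _)⟩

lemma mem_stepBall_succ : z ∈ stepBall δ x (n + 1) ↔ ∃ y ∈ stepBall δ x n, dist y z ≤ δ := by
  constructor
  · rintro ⟨p, hp0, rfl, hp⟩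
    exact ⟨p n, ⟨p, hp0, rfl, fun i hi => hp i (by omega)⟩, hp n (by omega)⟩
  · rintro ⟨y, ⟨p, hp0, rfl, hp⟩, hyz⟩
    refine ⟨Function.update p (n + 1) z, by simpa using hp0, by simp, fun i hi => ?_⟩
    rcases Nat.lt_succ_iff_lt_or_eq.1 hi with hi | rfl
    · simpa [Function.update_of_ne (show i ≠ n + 1 by omega),
        Function.update_of_ne (show i + 1 ≠ n + 1 by omega)] using hp i hi
    · simpa using hyz

lemma mem_stepBall_one : y ∈ stepBall δ x 1 ↔ dist x y ≤ δ := by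
  simp [mem_stepBall_succ]

lemma mem_stepBall_self (hδ : 0 ≤ δ) : x ∈ stepBall δ x n :=
  ⟨fun _ => x, rfl, rfl, fun _ _ => by simpa using hδ⟩

lemma mem_stepBall_add (hy : y ∈ stepBall δ x a) (hz : z ∈ stepBall δ y b) :
    z ∈ stepBall δ x (a + b) := by
  induction b generalizing z with
  | zero => simp_all
  | succ b ih =>
    obtain ⟨w, hw, hwz⟩ := mem_stepBall_succ.1 hz
    exact mem_stepBall_succ.2 ⟨w, ih hw, hwz⟩

lemma stepBall_mono (hδ : 0 ≤ δ) (hab : a ≤ b) : stepBall δ x a ⊆ stepBall δ x b := fun y hy => by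
  simpa [Nat.add_sub_cancel' hab] using mem_stepBall_add hy (mem_stepBall_self hδ (n := b - a))

lemma self_mem_deltaComponent (hδ : 0 ≤ δ) : x ∈ deltaComponent δ x :=
  ⟨0, mem_stepBall_self hδ⟩

lemma mem_deltaComponent_of_mem_stepBall (hy : y ∈ deltaComponent δ x)
    (hz : z ∈ stepBall δ y n) : z ∈ deltaComponent δ x :=
  let ⟨m, hm⟩ := hy
  ⟨m + n, mem_stepBall_add hm hz⟩

lemma mem_stepBall_of_path {p : ℕ → X} (hp : ∀ i < n, dist (p i) (p (i + 1)) ≤ δ)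
    (hab : a ≤ b) (hbn : b ≤ n) : p b ∈ stepBall δ (p a) (b - a) :=
  ⟨fun i => p (a + i), by simp, by simp [Nat.add_sub_cancel' hab],
    fun i hi => hp (a + i) (by omega)⟩

lemma dist_le_of_path {p : ℕ → X} (hp : ∀ i < n, dist (p i) (p (i + 1)) ≤ δ)
    (hab : a ≤ b) (hbn : b ≤ n) : dist (p a) (p b) ≤ (b - a : ℕ) * δ := by
  calc dist (p a) (p b) ≤ ∑ i ∈ Finset.Ico a b, dist (p i) (p (i + 1)) := dist_le_Ico_sum_dist p hab
    _ ≤ (Finset.Ico a b).card • δ := Finset.sum_le_card_nsmul _ _ _ fun i hi => by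
        have := (Finset.mem_Ico.1 hi).2
        exact hp i (by omega)
    _ = (b - a : ℕ) * δ := by simp

end Paths

section Shadowing

variable {X : Type*} [MetricSpace X] {x₀ : X} {Δ : ℝ} {k : ℕ}

lemma exists_finset_shadowing (hΔ : 0 ≤ Δ) {B : ℝ≥0∞}
    (hnet : ∀ z ∈ deltaComponent Δ x₀, ∃ F : Finset X, (F.card : ℝ≥0∞) ≤ B ∧
      ↑F ⊆ stepBall Δ z (k + 1) ∧ ∀ a ∈ stepBall Δ z (k + 1), ∃ y ∈ F, dist a y ≤ Δ)
    (m : ℕ) :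
    ∃ C : Finset (ℕ → X), (C.card : ℝ≥0∞) ≤ B ^ m ∧ (∀ z ∈ C, ∀ j, z j ∈ deltaComponent Δ x₀) ∧
      ∀ w : ℕ → X, w 0 = x₀ → (∀ j < m, w (j + 1) ∈ stepBall Δ (w j) k) →
        ∃ z ∈ C, ∀ j ≤ m, dist (w j) (z j) ≤ Δ := by
  classical
  induction m with
  | zero =>
    refine ⟨{fun _ => x₀}, by simp, by simpa using self_mem_deltaComponent hΔ, ?_⟩
    rintro w rfl -
    exact ⟨_, Finset.mem_singleton_self _, fun j hj => by simpa [Nat.le_zero.1 hj] using hΔ⟩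
  | succ m ih =>
    obtain ⟨C, hCcard, hCcomp, hCshadow⟩ := ih
    choose! F hFcard hFsub hFnet using hnet
    refine ⟨C.biUnion fun z => (F (z m)).image (Function.update z (m + 1)), ?_, ?_, ?_⟩
    · calc ((C.biUnion fun z => (F (z m)).image (Function.update z (m + 1))).card : ℝ≥0∞)
          ≤ ∑ z ∈ C, ((F (z m)).card : ℝ≥0∞) := by
            exact_mod_cast Finset.card_biUnion_le.trans
              (Finset.sum_le_sum fun z _ => Finset.card_image_le)
        _ ≤ C.card * B := by
            simpa using Finset.sum_le_card_nsmul C _ B fun z hz => hFcard _ (hCcomp z hz m)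
        _ ≤ B ^ m * B := by gcongr
        _ = B ^ (m + 1) := (pow_succ B m).symm
    · simp only [Finset.mem_biUnion, Finset.mem_image]
      rintro _ ⟨z, hz, y, hy, rfl⟩ j
      rcases eq_or_ne j (m + 1) with rfl | hj
      · simpa using mem_deltaComponent_of_mem_stepBall (hCcomp z hz m) (hFsub _ (hCcomp z hz m) hy)
      · simpa [Function.update_of_ne hj] using hCcomp z hz j
    · intro w hw0 hw
      obtain ⟨z, hz, hwz⟩ := hCshadow w hw0 fun j hj => hw j (by omega)
      have hstep : w (m + 1) ∈ stepBall Δ (z m) (1 + k) :=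
        mem_stepBall_add (mem_stepBall_one.2 (dist_comm (w m) (z m) ▸ hwz m le_rfl))
          (hw m (by omega))
      obtain ⟨y, hy, hwy⟩ := hFnet _ (hCcomp z hz m) _ (Nat.add_comm 1 k ▸ hstep)
      refine ⟨Function.update z (m + 1) y,
        Finset.mem_biUnion.2 ⟨z, hz, Finset.mem_image_of_mem _ hy⟩, fun j hj => ?_⟩
      rcases eq_or_ne j (m + 1) with rfl | hj'
      · simpa using hwy
      · simpa [Function.update_of_ne hj'] using hwz j (by omega)

end Shadowing

section Separation

variable {X : Type*} [MetricSpace X] {x₀ : X} {δ Δ R : ℝ} {k n : ℕ}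

lemma orbitDist_le_of_shadow (hk : 0 < k) {p q z : ℕ → X}
    (hp : ∀ i < n, dist (p i) (p (i + 1)) ≤ Δ) (hq : ∀ i < n, dist (q i) (q (i + 1)) ≤ Δ)
    (hpz : ∀ j ≤ n / k, dist (p (j * k)) (z j) ≤ Δ)
    (hqz : ∀ j ≤ n / k, dist (q (j * k)) (z j) ≤ Δ) :
    orbitDist n p q ≤ 2 * Δ * (k + 1) := by
  have hΔ : 0 ≤ Δ := dist_nonneg.trans (hpz 0 (Nat.zero_le _))
  refine Finset.sup'_le _ _ fun i hi => ?_
  have hin : i ≤ n := Nat.lt_succ_iff.1 (Finset.mem_range.1 hi)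
  have hjk : i / k * k ≤ i := Nat.div_mul_le_self i k
  have hj : i / k ≤ n / k := Nat.div_le_div_right hin
  have hlen : ((i - i / k * k : ℕ) : ℝ) * Δ ≤ k * Δ := by
    gcongr
    have := Nat.mod_lt i hk
    have := Nat.div_add_mod' i k
    omega
  have hpi := dist_le_of_path hp hjk hin
  have hqi := dist_le_of_path hq hjk hin
  calc dist (p i) (q i)
      ≤ dist (p (i / k * k)) (p i) + (dist (p (i / k * k)) (z (i / k))
          + dist (q (i / k * k)) (z (i / k))) + dist (q (i / k * k)) (q i) := by
        have := dist_triangle4 (p i) (p (i / k * k)) (q (i / k * k)) (q i)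
        have := dist_triangle_right (p (i / k * k)) (q (i / k * k)) (z (i / k))
        linarith [dist_comm (p i) (p (i / k * k))]
    _ ≤ 2 * Δ * (k + 1) := by linarith [hpz _ hj, hqz _ hj]

lemma sepCard_id_le_card (hδΔ : δ ≤ Δ) (hk : 0 < k) (hR : 2 * Δ * (k + 1) < R)
    {C : Finset (ℕ → X)}
    (hC : ∀ w : ℕ → X, w 0 = x₀ → (∀ j < n / k, w (j + 1) ∈ stepBall Δ (w j) k) →
      ∃ z ∈ C, ∀ j ≤ n / k, dist (w j) (z j) ≤ Δ) :
    sepCard id n R δ x₀ ≤ C.card := by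
  refine iSup₂_le fun S hS => iSup_le fun hsep => ?_
  have hpath : ∀ p ∈ S, ∀ i < n, dist (p i) (p (i + 1)) ≤ Δ :=
    fun p hp i hi => ((hS p hp).2 i hi).trans hδΔ
  have hshadow : ∀ p ∈ S, ∃ z ∈ C, ∀ j ≤ n / k, dist (p (j * k)) (z j) ≤ Δ := by
    intro p hp
    refine hC (fun j => p (j * k)) (by simpa using (hS p hp).1) fun j hj => ?_
    have := mem_stepBall_of_path (hpath p hp) (Nat.mul_le_mul_right k j.le_succ)
      ((Nat.le_div_iff_mul_le hk).1 hj)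
    simpa [Nat.succ_mul] using this
  choose! s hsC hs using hshadow
  have hinj : InjOn s S := fun p hp q hq hpq => by
    by_contra hne
    refine (hsep p hp q hq hne).not_gt (lt_of_le_of_lt ?_ hR)
    exact orbitDist_le_of_shadow hk (hpath p hp) (hpath q hq) (hs p hp) (hpq ▸ hs q hq)
  have := Set.encard_le_encard_of_injOn hsC hinj
  rw [Set.encard_coe_eq_coe_finsetCard] at this
  exact_mod_cast this

end Separation

section Packing

variable {X : Type*} [MetricSpace X] [MeasurableSpace X] (μ : Measure X) {r : ℝ} {c : ℝ≥0∞}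

lemma encard_mul_le_measure_of_isSeparated [OpensMeasurableSpace X] {ε : ℝ≥0} {C B : Set X}
    (hc : ∀ x, c ≤ μ (closedBall x r)) (hrε : 2 * r < ε) (hC : IsSeparated (ε : ℝ≥0∞) C)
    (hCB : ∀ y ∈ C, closedBall y r ⊆ B) : (C.encard : ℝ≥0∞) * c ≤ μ B := by
  have hdisj : Pairwise fun y y' : C => Disjoint (closedBall (y : X) r) (closedBall y' r) := by
    intro y y' hyy'
    have hsep : (ε : ℝ≥0∞) < edist (y : X) y' := hC y.2 y'.2 (Subtype.coe_ne_coe.2 hyy')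
    rw [edist_nndist, ENNReal.coe_lt_coe, ← NNReal.coe_lt_coe, coe_nndist] at hsep
    exact closedBall_disjoint_closedBall (by linarith)
  calc (C.encard : ℝ≥0∞) * c = ∑' _ : C, c := (ENNReal.tsum_set_const C c).symm
    _ ≤ ∑' y : C, μ (closedBall y r) := ENNReal.tsum_le_tsum fun y => hc y
    _ ≤ μ (⋃ y : C, closedBall y r) :=
      tsum_meas_le_meas_iUnion_of_disjoint μ (fun _ => measurableSet_closedBall) hdisj
    _ ≤ μ B := measure_mono (iUnion_subset fun y => hCB y y.2)

lemma exists_finset_net_card_le_measure_div [OpensMeasurableSpace X] {ε : ℝ≥0} {A B : Set X}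
    (hc : ∀ x, c ≤ μ (closedBall x r)) (hc0 : c ≠ 0) (hrε : 2 * r < ε)
    (hAB : ∀ y ∈ A, closedBall y r ⊆ B) (hB : μ B ≠ ⊤) :
    ∃ F : Finset X, (F.card : ℝ≥0∞) ≤ μ B / c ∧ ↑F ⊆ A ∧ ∀ a ∈ A, ∃ y ∈ F, dist a y ≤ ε := by
  have hpack : (packingNumber ε A : ℝ≥0∞) * c ≤ μ B := by
    simp only [packingNumber, ENat.toENNReal_iSup, ENNReal.iSup_mul, iSup_le_iff]
    exact fun C hCA hC =>
      encard_mul_le_measure_of_isSeparated μ hc hrε hC fun y hy => hAB y (hCA hy)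
  have hfin : packingNumber ε A ≠ ⊤ := by
    rintro htop
    simp [htop, ENNReal.top_mul hc0, hB] at hpack
  have hN : (maximalSeparatedSet ε A).Finite := by
    rw [← Set.encard_ne_top_iff, encard_maximalSeparatedSet hfin]
    exact hfin
  refine ⟨hN.toFinset, ?_, by simpa using maximalSeparatedSet_subset, fun a ha => ?_⟩
  · rw [ENNReal.le_div_iff_mul_le (Or.inl hc0) (Or.inr hB)]
    have hcard : (hN.toFinset.card : ℝ≥0∞) = packingNumber ε A := by
      rw [← encard_maximalSeparatedSet hfin, hN.encard_eq_coe_toFinset_card]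
      rfl
    rwa [hcard]
  · obtain ⟨y, hy, hay⟩ := mem_iUnion₂.1
      (isCover_iff_subset_iUnion_closedBall.1 (isCover_maximalSeparatedSet hfin) ha)
    exact ⟨y, hN.mem_toFinset.2 hy, hay⟩

variable {δ : ℝ} {x₀ : X}

lemma measure_stepBall_le_volGrowth {z : X} {l : ℕ} (hz : z ∈ deltaComponent δ x₀) :
    μ (stepBall δ z l) ≤ volGrowth μ δ x₀ l :=
  le_iSup₂ (f := fun y (_ : y ∈ deltaComponent δ x₀) => μ (stepBall δ y l)) z hz

lemma volGrowth_mono (hδ : 0 ≤ δ) : Monotone (volGrowth μ δ x₀) :=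
  fun _ _ hab => iSup₂_mono fun _ _ => measure_mono (stepBall_mono hδ hab)

lemma exists_finset_net_stepBall [OpensMeasurableSpace X] {Δ : ℝ} {k : ℕ} {z : X}
    (hr : 0 ≤ r) (hrΔ : 2 * r < Δ) (hc : ∀ x, c ≤ μ (closedBall x r)) (hc0 : c ≠ 0)
    (hk : 1 ≤ k) (hV : volGrowth μ Δ x₀ (3 * k) ≠ ⊤) (hz : z ∈ deltaComponent Δ x₀) :
    ∃ F : Finset X, (F.card : ℝ≥0∞) ≤ volGrowth μ Δ x₀ (3 * k) / c ∧
      ↑F ⊆ stepBall Δ z (k + 1) ∧ ∀ a ∈ stepBall Δ z (k + 1), ∃ y ∈ F, dist a y ≤ Δ := by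
  have hΔ : 0 ≤ Δ := by linarith
  have hB := measure_stepBall_le_volGrowth μ (l := 3 * k) hz
  have hAB : ∀ y ∈ stepBall Δ z (k + 1), closedBall y r ⊆ stepBall Δ z (3 * k) := by
    refine fun y hy u hu => stepBall_mono hΔ (by omega : k + 1 + 1 ≤ 3 * k) ?_
    exact mem_stepBall_add hy (mem_stepBall_one.2 (by linarith [mem_closedBall'.1 hu]))
  obtain ⟨F, hFcard, hFA, hFnet⟩ := exists_finset_net_card_le_measure_div μ hc hc0
    (ε := Δ.toNNReal) (by rwa [Real.coe_toNNReal _ hΔ]) hAB (ne_top_of_le_ne_top hV hB)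
  refine ⟨F, hFcard.trans (by gcongr), hFA, ?_⟩
  simpa only [Real.coe_toNNReal _ hΔ] using hFnet

end Packing

section ExtendedLog

lemma elog_ne_top {x : ℝ≥0∞} (hx : x ≠ ⊤) : elog x ≠ ⊤ := by
  simp [elog, hx]

lemma elog_mono {x y : ℝ≥0∞} (hxy : x ≤ y) : elog x ≤ elog y := by
  rcases eq_or_ne y ⊤ with rfl | hy
  · simp [elog]
  have hx : x ≠ ⊤ := ne_top_of_le_ne_top hy hxy
  rcases eq_or_ne x 0 with rfl | hx0
  · simp [elog]
  simp only [elog, hx, hy, if_false]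
  exact ENNReal.ofReal_le_ofReal (Real.log_le_log (ENNReal.toReal_pos hx0 hx)
    ((ENNReal.toReal_le_toReal hx hy).2 hxy))

lemma elog_mul_le {x y : ℝ≥0∞} : elog (x * y) ≤ elog x + elog y := by
  rcases eq_or_ne x 0 with rfl | hx0
  · simp [elog]
  rcases eq_or_ne y 0 with rfl | hy0
  · simp [elog]
  rcases eq_or_ne x ⊤ with rfl | hx
  · simp [elog]
  rcases eq_or_ne y ⊤ with rfl | hy
  · simp [elog]
  simp only [elog, hx, hy, ENNReal.mul_ne_top hx hy, if_false, ENNReal.toReal_mul]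
  rw [Real.log_mul (ENNReal.toReal_ne_zero.2 ⟨hx0, hx⟩) (ENNReal.toReal_ne_zero.2 ⟨hy0, hy⟩)]
  exact ENNReal.ofReal_add_le

lemma elog_pow_le (x : ℝ≥0∞) (m : ℕ) : elog (x ^ m) ≤ m * elog x := by
  induction m with
  | zero => simp [elog]
  | succ m ih =>
    calc elog (x ^ (m + 1)) ≤ elog (x ^ m) + elog x := pow_succ x m ▸ elog_mul_le
      _ ≤ m * elog x + elog x := by gcongr
      _ = (m + 1 : ℕ) * elog x := by push_cast; ring

lemma ne_top_of_tendsto_elog_div {v : ℕ → ℝ≥0∞} (hmono : Monotone v)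
    (hv : Tendsto (fun l : ℕ => elog (v l) / l) atTop (nhds 0)) (l : ℕ) : v l ≠ ⊤ := by
  intro htop
  obtain ⟨l', hl', hlt⟩ := ((eventually_ge_atTop l).and (hv.eventually_lt_const zero_lt_one)).exists
  have : v l' = ⊤ := top_le_iff.1 (htop ▸ hmono hl')
  simp [this, elog, ENNReal.top_div_of_ne_top (ENNReal.natCast_ne_top l')] at hlt

lemma limsup_elog_div_le {s : ℕ → ℝ≥0∞} {B : ℝ≥0∞} {k : ℕ} (hk : k ≠ 0)
    (hs : ∀ n, s n ≤ B ^ (n / k)) :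
    limsup (fun n : ℕ => elog (s n) / n) atTop ≤ elog B / k := by
  refine limsup_le_of_le (by isBoundedDefault) (Eventually.of_forall fun n => ?_)
  refine ENNReal.div_le_of_le_mul ?_
  calc elog (s n) ≤ elog (B ^ (n / k)) := elog_mono (hs n)
    _ ≤ (n / k : ℕ) * elog B := elog_pow_le B _
    _ = elog B / k * k * (n / k : ℕ) := by
      rw [ENNReal.div_mul_cancel (by exact_mod_cast hk) (ENNReal.natCast_ne_top k), mul_comm]
    _ ≤ elog B / k * n := by
      rw [mul_assoc]
      gcongr
      exact_mod_cast Nat.mul_div_le n k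

lemma tendsto_elog_comp_mul_div {v : ℕ → ℝ≥0∞}
    (hv : Tendsto (fun l : ℕ => elog (v l) / l) atTop (nhds 0)) {a : ℕ} (ha : a ≠ 0)
    {c : ℝ≥0∞} (hc : c ≠ 0) :
    Tendsto (fun k : ℕ => elog (v (a * k) / c) / k) atTop (nhds 0) := by
  have hmul : Tendsto (fun k : ℕ => a * k) atTop atTop :=
    tendsto_atTop_atTop.2 fun b => ⟨b, fun k hk => hk.trans (Nat.le_mul_of_pos_left k (by omega))⟩
  have h₁ : Tendsto (fun k : ℕ => (a : ℝ≥0∞) * (elog (v (a * k)) / (a * k))) atTop (nhds 0) := by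
    simpa using ENNReal.Tendsto.const_mul (hv.comp hmul) (Or.inr (ENNReal.natCast_ne_top a))
  have h₂ : Tendsto (fun k : ℕ => elog c⁻¹ / k) atTop (nhds 0) := by
    simpa using ENNReal.Tendsto.const_div ENNReal.tendsto_nat_nhds_top
      (Or.inr (elog_ne_top (ENNReal.inv_ne_top.2 hc)))
  refine tendsto_of_tendsto_of_tendsto_of_le_of_le tendsto_const_nhds (by simpa using h₁.add h₂)
    (fun _ => bot_le) fun k => ?_
  calc elog (v (a * k) / c) / k ≤ (elog (v (a * k)) + elog c⁻¹) / k := by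
        gcongr
        exact elog_mul_le
    _ = a * (elog (v (a * k)) / (a * k)) + elog c⁻¹ / k := by
        rw [ENNReal.add_div, ← mul_div_assoc,
          ENNReal.mul_div_mul_left _ _ (by exact_mod_cast ha) (ENNReal.natCast_ne_top a)]

end ExtendedLog

/-- Let `(X,d,μ)` be a metric measure space such that for some `r > 0`
the measures of closed `r`-balls are uniformly bounded away from zero, and fix a
basepoint `x₀`. If `lim_{l→∞} (1/l) log vol_δ^{x₀}(l) = 0` for all `δ > 0`, then the
coarse entropy of `X` is zero. -/
theorem coarseEntropy_zero_of_measure_subexp {X : Type*} [MetricSpace X]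
    [MeasurableSpace X] [BorelSpace X] (μ : MeasureTheory.Measure X)
    (hr : ∃ r : ℝ, 0 < r ∧ 0 < ⨅ x : X, μ (Metric.closedBall x r)) (x₀ : X)
    (h : ∀ δ : ℝ, 0 < δ →
      Filter.Tendsto (fun l : ℕ => elog (volGrowth μ δ x₀ l) / (l : ℝ≥0∞))
        Filter.atTop (nhds 0)) :
    coarseEntropyAt (id : X → X) x₀ = 0 := by
  obtain ⟨r, hr, hc0⟩ := hr
  have hc : ∀ x, ⨅ y, μ (closedBall y r) ≤ μ (closedBall x r) := iInf_le _
  refine nonpos_iff_eq_zero.1 (iSup₂_le fun δ _ => ?_)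
  set Δ := max δ (2 * r + 1)
  have hΔ : 0 < Δ := lt_max_of_lt_right (by linarith)
  have hV := ne_top_of_tendsto_elog_div (volGrowth_mono μ hΔ.le) (h Δ hΔ)
  refine ge_of_tendsto (tendsto_elog_comp_mul_div (h Δ hΔ) three_ne_zero hc0.ne') ?_
  filter_upwards [eventually_ge_atTop 1] with k hk
  refine (iInf₂_le (2 * Δ * (k + 1) + 1) (by positivity)).trans
    (limsup_elog_div_le (by omega) fun n => ?_)
  obtain ⟨C, hCcard, -, hC⟩ := exists_finset_shadowing hΔ.le
    (fun z hz => exists_finset_net_stepBall μ hr.le (lt_max_of_lt_right (by linarith)) hc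
      hc0.ne' hk (hV _) hz) (n / k)
  exact (sepCard_id_le_card (le_max_left _ _) hk (lt_add_one _) hC).trans hCcard
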